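/- Let λ ∈ [0,1] and let Φ = √λ·ψ000⊗e₀ + √(1−λ)·ψ100⊗e₁ ∈ ℂ^{Fin 3 → Fin 2} ⊗ ℂ² (a unit vector on three qubits plus one ancilla qubit for Eve). Let R be the 4×4 matrix on the last two tensor factors (party P₃ and Eve) obtained by partially tracing out the first two qubits: R_{(s,e),(s',e')} = Σ_{t ∈ Fin 2 × Fin 2} Φ_{(t,s,e)} · conj(Φ_{(t,s',e')}). Then R = (1/2)·[λ·I₂⊗E₀₀ + √(λ(1−λ))·σz⊗(E₀₁+E₁₀) + (1−λ)·I₂⊗E₁₁], where E_{ab} = |e_a⟩⟨e_b| are the 2×2 matrix units on Eve's qubit. -/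

import Mathlib

open Matrix BigOperators Finset Kronecker

noncomputable section

def sigmaz : Matrix (Fin 2) (Fin 2) ℂ := !![1, 0; 0, -1]

/-- The three-qubit GHZ basis vector
`|ψ_{ijk}⟩ = (1/√2)(e_{(0,j,k)} + (−1)^i e_{(1,1−j,1−k)})`. -/
def psi (i j k : Fin 2) : (Fin 3 → Fin 2) → ℂ := fun f =>
  ((Real.sqrt 2 : ℝ) : ℂ)⁻¹ *
    ((if f = ![0, j, k] then 1 else 0)
      + (-1 : ℂ) ^ (i : ℕ) * (if f = ![1, 1 - j, 1 - k] then 1 else 0))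

/-- The purification `Φ = √λ ψ₀₀₀⊗e₀ + √(1−λ) ψ₁₀₀⊗e₁` on three qubits plus Eve's qubit. -/
def Phi (lam : ℝ) : (Fin 3 → Fin 2) × Fin 2 → ℂ := fun p =>
  ((Real.sqrt lam : ℝ) : ℂ) * psi 0 0 0 p.1 * (if p.2 = 0 then 1 else 0)
    + ((Real.sqrt (1 - lam) : ℝ) : ℂ) * psi 1 0 0 p.1 * (if p.2 = 1 then 1 else 0)

/-!
`Φ = (1/√2) Σ_s |s s s⟩ ⊗ v_s` with `v_s = √λ e₀ + (-1)^s √(1-λ) e₁`: all three qubits agree.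
Tracing out the first two qubits therefore kills the coherences between different values of `s`
and leaves `(1/2) Σ_s E_ss ⊗ |v_s⟩⟨v_s|`; expanding `|v_s⟩⟨v_s|` and reading `(-1)^s` as the
diagonal of `σz` gives the formula.
-/

theorem sigmaz_apply (s s' : Fin 2) :
    sigmaz s s' = if s = s' then (-1) ^ (s : ℕ) else 0 := by
  fin_cases s <;> fin_cases s' <;> simp [sigmaz]

def eveState (lam : ℝ) (s : Fin 2) : Fin 2 → ℂ :=
  ![(Real.sqrt lam : ℂ), (-1) ^ (s : ℕ) * (Real.sqrt (1 - lam) : ℂ)]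

theorem Phi_apply (lam : ℝ) (a b s e : Fin 2) :
    Phi lam (![a, b, s], e) =
      if (a, b) = (s, s) then ((Real.sqrt 2 : ℝ) : ℂ)⁻¹ * eveState lam s e else 0 := by
  fin_cases a <;> fin_cases b <;> fin_cases s <;> fin_cases e <;>
    simp [Phi, psi, eveState, funext_iff, Fin.forall_fin_succ] <;> ring

theorem inv_sqrt_two_mul_self : ((Real.sqrt 2 : ℝ) : ℂ)⁻¹ * ((Real.sqrt 2 : ℝ) : ℂ)⁻¹ = 1 / 2 := by
  rw [← mul_inv, ← Complex.ofReal_mul, Real.mul_self_sqrt zero_le_two]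
  norm_num

theorem sum_Phi_mul_conj (lam : ℝ) (s e s' e' : Fin 2) :
    ∑ t : Fin 2 × Fin 2,
        Phi lam (![t.1, t.2, s], e) * (starRingEnd ℂ) (Phi lam (![t.1, t.2, s'], e')) =
      if s = s' then 1 / 2 * vecMulVec (eveState lam s) (star (eveState lam s)) e e' else 0 := by
  simp only [Phi_apply, Prod.mk.eta, apply_ite (starRingEnd ℂ), map_zero, ite_mul, zero_mul,
    mul_ite, mul_zero, Finset.sum_ite_eq', Finset.mem_univ, if_true]
  simp only [Prod.mk.injEq, and_self, eq_comm (a := s')]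
  split_ifs with h
  · subst h
    rw [vecMulVec_apply, Pi.star_apply, Complex.star_def, map_mul, Complex.conj_inv,
      Complex.conj_ofReal]
    linear_combination eveState lam s e * (starRingEnd ℂ) (eveState lam s e') *
      inv_sqrt_two_mul_self
  · rfl

theorem vecMulVec_eveState (lam : ℝ) (h0 : 0 ≤ lam) (h1 : lam ≤ 1) (s : Fin 2) :
    vecMulVec (eveState lam s) (star (eveState lam s)) =
      (lam : ℂ) • Matrix.single 0 0 1
        + ((-1) ^ (s : ℕ) * ((Real.sqrt (lam * (1 - lam)) : ℝ) : ℂ)) •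
            (Matrix.single 0 1 1 + Matrix.single 1 0 1)
        + ((1 - lam : ℝ) : ℂ) • Matrix.single 1 1 1 := by
  have hlam : (Real.sqrt lam : ℂ) * Real.sqrt lam = lam := by
    rw [← Complex.ofReal_mul, Real.mul_self_sqrt h0]
  have hlam' : (Real.sqrt (1 - lam) : ℂ) * Real.sqrt (1 - lam) = 1 - lam := by
    rw [← Complex.ofReal_mul, Real.mul_self_sqrt (sub_nonneg.mpr h1)]
    push_cast; rfl
  have hmix : (Real.sqrt lam : ℂ) * Real.sqrt (1 - lam) = Real.sqrt (lam * (1 - lam)) := by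
    rw [← Complex.ofReal_mul, Real.sqrt_mul h0]
  ext e e'
  fin_cases s <;> fin_cases e <;> fin_cases e' <;>
    simp [eveState, vecMulVec_apply, hlam, hlam', hmix, mul_comm (Real.sqrt (1 - lam) : ℂ)]

/-- The reduced state on party `P₃` and Eve obtained by partially tracing out the first
two qubits of `Φ` equals
`(1/2)(λ I₂⊗E₀₀ + √(λ(1−λ)) σz⊗(E₀₁+E₁₀) + (1−λ) I₂⊗E₁₁)`. -/
theorem reduced_state_P3_Eve (lam : ℝ) (h0 : 0 ≤ lam) (h1 : lam ≤ 1) :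
    (Matrix.of fun p q : Fin 2 × Fin 2 =>
        ∑ t : Fin 2 × Fin 2,
          Phi lam (![t.1, t.2, p.1], p.2) * (starRingEnd ℂ) (Phi lam (![t.1, t.2, q.1], q.2)))
      = ((1 : ℂ) / 2) •
          ((lam : ℂ) • ((1 : Matrix (Fin 2) (Fin 2) ℂ) ⊗ₖ Matrix.single 0 0 (1 : ℂ))
            + ((Real.sqrt (lam * (1 - lam)) : ℝ) : ℂ) •
                (sigmaz ⊗ₖ (Matrix.single 0 1 (1 : ℂ) + Matrix.single 1 0 (1 : ℂ)))
            + ((1 - lam : ℝ) : ℂ) •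
                ((1 : Matrix (Fin 2) (Fin 2) ℂ) ⊗ₖ Matrix.single 1 1 (1 : ℂ))) := by
  ext ⟨s, e⟩ ⟨s', e'⟩
  rw [of_apply, sum_Phi_mul_conj]
  simp only [Matrix.smul_apply, Matrix.add_apply, kroneckerMap_apply, one_apply, sigmaz_apply,
    smul_eq_mul]
  split_ifs with h
  · subst h
    rw [vecMulVec_eveState lam h0 h1]
    simp only [Matrix.smul_apply, Matrix.add_apply, smul_eq_mul]
    ring
  · ring
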